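/- arXiv:1412.3682 — 2 statements merged into one kernel-verified Lean document; each statement's English description precedes it below -/
import Mathlib

section
/- Let G be a partially ordered abelian group with strict interpolation. If x, y₁, y₂, …, y_n ∈ G⁺ \ {0} satisfy x < y₁ + y₂ + ⋯ + y_n, then there exist x₁, …, x_n ∈ G⁺ \ {0} such that x = x₁ + ⋯ + x_n and xᵢ < yᵢ for all i. -/
/-- A partially ordered abelian group `G` has *strict interpolation* if whenever
`xᵢ < yⱼ` for all `i, j ∈ {1,2}`, there exists `z` with `xᵢ < z < yⱼ` for all `i, j`. -/
def StrictInterpolation (G : Type*) [AddCommGroup G] [PartialOrder G] : Prop :=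
  ∀ x₁ x₂ y₁ y₂ : G, x₁ < y₁ → x₁ < y₂ → x₂ < y₁ → x₂ < y₂ →
    ∃ z : G, x₁ < z ∧ x₂ < z ∧ z < y₁ ∧ z < y₂

theorem strict_riesz_decomposition (G : Type*) [AddCommGroup G] [PartialOrder G]
    [CovariantClass G G (· + ·) (· ≤ ·)] (hG : StrictInterpolation G)
    (n : ℕ) (x : G) (y : Fin n → G)
    (hx : 0 < x) (hy : ∀ i, 0 < y i) (hlt : x < ∑ i, y i) :
    ∃ xs : Fin n → G, (∀ i, 0 < xs i) ∧ x = ∑ i, xs i ∧ ∀ i, xs i < y i := by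
  letI : IsOrderedAddMonoid G :=
    { add_le_add_left := fun a b h c => add_le_add h (le_refl c) }
  induction n generalizing x with
  | zero =>
    simp only [Finset.univ_eq_empty, Finset.sum_empty] at hlt
    exact absurd (hx.trans hlt) (lt_irrefl 0)
  | succ n ih =>
    rcases Nat.eq_zero_or_pos n with hn | hn
    · subst hn
      refine ⟨fun _ => x, fun _ => hx, by simp, fun i => ?_⟩
      have : i = 0 := Fin.fin_one_eq_zero i
      subst this
      simpa using hlt
    · have hne : (Finset.univ : Finset (Fin n)).Nonempty := by
        haveI := Fin.pos_iff_nonempty.mp hn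
        exact Finset.univ_nonempty
      set S : G := ∑ i : Fin n, y i.succ with hS
      have hSpos : 0 < S := Finset.sum_pos (fun i _ => hy i.succ) hne
      have hsum : (∑ i, y i) = y 0 + S := by rw [Fin.sum_univ_succ]
      -- find z with (x - S, 0) < z < (y 0, x)
      have h1 : x - S < y 0 := by
        rw [sub_lt_iff_lt_add']
        rw [hsum] at hlt; simpa [add_comm] using hlt
      have h2 : x - S < x := by simpa using sub_lt_self x hSpos
      obtain ⟨z, hz1, hz2, hz3, hz4⟩ := hG (x - S) 0 (y 0) x h1 h2 (hy 0) hx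
      have hx' : 0 < x - z := sub_pos.mpr hz4
      have hlt' : x - z < S := by
        rw [sub_lt_comm]; exact hz1
      obtain ⟨xs', hpos', hsum', hlt''⟩ := ih (x - z) (fun i => y i.succ) hx'
        (fun i => hy i.succ) (by simpa [hS] using hlt')
      refine ⟨Fin.cons z xs', ?_, ?_, ?_⟩
      · intro i
        refine Fin.cases ?_ ?_ i
        · simpa using hz2
        · intro j; simpa using hpos' j
      · rw [Fin.sum_univ_succ]
        simp only [Fin.cons_zero, Fin.cons_succ]
        rw [← hsum']
        abel
      · intro i
        refine Fin.cases ?_ ?_ i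
        · simpa using hz3
        · intro j; simpa using hlt'' j
end

section
/- Let G be a partially ordered abelian group with strict interpolation. If x₁, …, x_n, y₁, …, y_k ∈ G⁺ \ {0} satisfy x₁ + ⋯ + x_n = y₁ + ⋯ + y_k, then there exist z_{i,j} ∈ G⁺ \ {0} for i = 1, …, n and j = 1, …, k such that xᵢ = z_{i,1} + ⋯ + z_{i,k} for each i and y_j = z_{1,j} + ⋯ + z_{n,j} for each j. -/
section Aux

variable {G : Type*} [AddCommGroup G] [PartialOrder G]
  [CovariantClass G G (· + ·) (· ≤ ·)]

lemma strict_two_by_two (hG : StrictInterpolation G) (x₁ x₂ y₁ y₂ : G)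
    (hx₁ : 0 < x₁) (hx₂ : 0 < x₂) (hy₁ : 0 < y₁) (hy₂ : 0 < y₂)
    (hsum : x₁ + x₂ = y₁ + y₂) :
    ∃ a b c d : G, 0 < a ∧ 0 < b ∧ 0 < c ∧ 0 < d ∧
      x₁ = a + b ∧ x₂ = c + d ∧ y₁ = a + c ∧ y₂ = b + d := by
  have key : x₁ - y₂ = y₁ - x₂ := by
    rw [sub_eq_sub_iff_add_eq_add]
    exact hsum
  obtain ⟨z, hz0, hz1, hz2, hz3⟩ :=
    hG 0 (x₁ - y₂) x₁ y₁ hx₁ hy₁ (sub_lt_self x₁ hy₂)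
      (key ▸ sub_lt_self y₁ hx₂)
  refine ⟨z, x₁ - z, y₁ - z, y₂ - x₁ + z, hz0, sub_pos.mpr hz2, sub_pos.mpr hz3,
    ?_, ?_, ?_, ?_, ?_⟩
  · rw [show y₂ - x₁ + z = z - (x₁ - y₂) by abel]
    exact sub_pos.mpr hz1
  · abel
  · have hx2 : x₂ = y₁ + y₂ - x₁ := by
      rw [eq_sub_iff_add_eq, add_comm]; exact hsum
    rw [hx2]; abel
  · abel
  · abel

lemma strict_two_by_many (hG : StrictInterpolation G) :
    ∀ (k : ℕ) (x₁ x₂ : G) (y : Fin k → G), 0 < x₁ → 0 < x₂ → (∀ j, 0 < y j) →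
      x₁ + x₂ = ∑ j, y j →
      ∃ z₁ z₂ : Fin k → G, (∀ j, 0 < z₁ j) ∧ (∀ j, 0 < z₂ j) ∧
        x₁ = ∑ j, z₁ j ∧ x₂ = ∑ j, z₂ j ∧ ∀ j, y j = z₁ j + z₂ j := by
  intro k
  induction k with
  | zero =>
    intro x₁ x₂ y hx₁ hx₂ _ hsum
    simp only [Finset.univ_eq_empty, Finset.sum_empty] at hsum
    exact absurd hsum (add_pos hx₁ hx₂).ne'
  | succ m ih =>
    intro x₁ x₂ y hx₁ hx₂ hy hsum
    match m with
    | 0 =>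
      refine ⟨fun _ => x₁, fun _ => x₂, fun _ => hx₁, fun _ => hx₂, ?_, ?_, ?_⟩
      · show x₁ = ∑ _j : Fin 1, x₁
        simp
      · show x₂ = ∑ _j : Fin 1, x₂
        simp
      intro j
      have hj : y j = y 0 := by congr 1; exact Fin.ext (by omega)
      have hsum' : x₁ + x₂ = y 0 := hsum.trans (Fin.sum_univ_one y)
      rw [hj]; exact hsum'.symm
    | m' + 1 =>
      -- combine the first two columns
      set y' : Fin (m' + 1) → G := Fin.cons (y 0 + y 1) (fun j => y j.succ.succ) with hy'
      have hy'pos : ∀ j, 0 < y' j := by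
        intro j
        refine Fin.cases ?_ (fun j' => ?_) j
        · simpa [hy'] using add_pos (hy 0) (hy 1)
        · simpa [hy'] using hy j'.succ.succ
      have hsum' : x₁ + x₂ = ∑ j, y' j := by
        rw [hsum]
        simp [hy', Fin.sum_univ_succ, add_assoc]
      obtain ⟨z₁', z₂', hz₁'pos, hz₂'pos, hr₁, hr₂, hcol⟩ :=
        ih x₁ x₂ y' hx₁ hx₂ hy'pos hsum'
      have hcol0 : z₁' 0 + z₂' 0 = y 0 + y 1 := by
        have h0 := hcol 0
        simp only [hy', Fin.cons_zero] at h0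
        exact h0.symm
      obtain ⟨a, b, c, d, hapos, hbpos, hcpos, hdpos, hab, hcd, hac, hbd⟩ :=
        strict_two_by_two hG (z₁' 0) (z₂' 0) (y 0) (y 1)
          (hz₁'pos 0) (hz₂'pos 0) (hy 0) (hy 1) hcol0
      refine ⟨Fin.cons a (Fin.cons b (fun j => z₁' j.succ)),
              Fin.cons c (Fin.cons d (fun j => z₂' j.succ)), ?_, ?_, ?_, ?_, ?_⟩
      · intro j
        refine Fin.cases ?_ (fun j' => Fin.cases ?_ (fun j'' => ?_) j') j <;>
          simp [hapos, hbpos, hz₁'pos]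
      · intro j
        refine Fin.cases ?_ (fun j' => Fin.cases ?_ (fun j'' => ?_) j') j <;>
          simp [hcpos, hdpos, hz₂'pos]
      · rw [hr₁]
        simp only [Fin.sum_univ_succ, Fin.cons_zero, Fin.cons_succ]
        rw [hab, add_assoc]
      · rw [hr₂]
        simp only [Fin.sum_univ_succ, Fin.cons_zero, Fin.cons_succ]
        rw [hcd, add_assoc]
      · intro j
        refine Fin.cases ?_ (fun j' => Fin.cases ?_ (fun j'' => ?_) j') j
        · simpa using hac
        · simpa using hbd
        · have := hcol j''.succ
          simp [hy'] at this
          simpa using this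

end Aux

theorem strict_riesz_refinement (G : Type*) [AddCommGroup G] [PartialOrder G]
    [CovariantClass G G (· + ·) (· ≤ ·)] (hG : StrictInterpolation G)
    (n k : ℕ) (x : Fin n → G) (y : Fin k → G)
    (hx : ∀ i, 0 < x i) (hy : ∀ j, 0 < y j)
    (hsum : ∑ i, x i = ∑ j, y j) :
    ∃ z : Fin n → Fin k → G, (∀ i j, 0 < z i j) ∧
      (∀ i, x i = ∑ j, z i j) ∧ (∀ j, y j = ∑ i, z i j) := by
  letI : IsOrderedAddMonoid G :=
    { add_le_add_left := fun a b h c => by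
        rw [add_comm a, add_comm b]; exact CovariantClass.elim c h }
  induction n generalizing y with
  | zero =>
    match k with
    | 0 => exact ⟨fun i j => 0, fun i => i.elim0, fun i => i.elim0, fun j => j.elim0⟩
    | k' + 1 =>
      exfalso
      simp only [Finset.univ_eq_empty, Finset.sum_empty] at hsum
      have : (0 : G) < ∑ j, y j :=
        Finset.sum_pos (fun j _ => hy j) Finset.univ_nonempty
      exact absurd hsum this.ne
  | succ m ih =>
    match m, ih with
    | 0, _ =>
      refine ⟨fun _ j => y j, fun _ j => hy j, fun i => ?_, fun j => by simp⟩
      have : x i = x 0 := by congr 1; exact Fin.ext (by omega)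
      rw [this, ← hsum]
      simp
    | m' + 1, ih =>
      have hXpos : 0 < ∑ i : Fin (m' + 1), x i.succ :=
        Finset.sum_pos (fun i _ => hx i.succ) Finset.univ_nonempty
      have hsplit : x 0 + ∑ i : Fin (m' + 1), x i.succ = ∑ j, y j := by
        rw [← hsum]; exact (Fin.sum_univ_succ x).symm
      obtain ⟨z₁, z₂, hz₁pos, hz₂pos, hr₁, hr₂, hcol⟩ :=
        strict_two_by_many hG k (x 0) (∑ i : Fin (m' + 1), x i.succ) y
          (hx 0) hXpos hy hsplit
      obtain ⟨w, hwpos, hwrow, hwcol⟩ :=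
        ih (fun i => x i.succ) z₂ (fun i => hx i.succ) hz₂pos hr₂
      refine ⟨Fin.cons z₁ w, ?_, ?_, ?_⟩
      · intro i j
        refine Fin.cases ?_ (fun i' => ?_) i
        · simpa using hz₁pos j
        · simpa using hwpos i' j
      · intro i
        refine Fin.cases ?_ (fun i' => ?_) i
        · simpa using hr₁
        · simpa using hwrow i'
      · intro j
        rw [Fin.sum_univ_succ (f := fun (i : Fin (m' + 1 + 1)) => (Fin.cons z₁ w : Fin (m' + 1 + 1) → Fin k → G) i j)]
        simp only [Fin.cons_zero, Fin.cons_succ]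
        rw [hcol j, hwcol j]
end
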